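/- If T₁, T₂ are sub-n-normal operators with minimal n-normal extensions S₁, S₂ respectively, and T₁ is unitarily equivalent to T₂, then S₁ is unitarily equivalent to S₂. In particular, any two minimal n-normal extensions of the same sub-n-normal operator are unitarily equivalent. -/

import Mathlib

/-!
By Fuglede's theorem `S` commutes with `(Sⁿ)*`, so the span of the vectors `(S*ⁿ)ᵏ V x` is
invariant under both `S` and `S*ⁿ`. On its closure the `n`-th power of the restriction of `S` is
therefore still normal, and minimality forces this closure to be the whole space. The Gram matrix
`⟪(S*ⁿ)ʲ V x, (S*ⁿ)ᵏ V y⟫ = ⟪Tⁿᵏ x, Tⁿʲ y⟫` of these vectors depends only on `T`, so `U` induces a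
unitary between the two extension spaces mapping generators to generators; it intertwines
`S₁` and `S₂` because each `Sᵢ` acts on the generators through `Tᵢ`.
-/

open ContinuousLinearMap

section

variable {H K : Type*} [NormedAddCommGroup H] [InnerProductSpace ℂ H] [CompleteSpace H]
  [NormedAddCommGroup K] [InnerProductSpace ℂ K] [CompleteSpace K]

/-- `S ∈ B(K)` is an n-normal extension of `T ∈ B(H)` along the isometric embedding
`V : H → K` if `Sⁿ` is normal, `S` leaves (the image of) `H` invariant and `S|_H = T`. -/
def IsNNormalExt (n : ℕ) (V : H →ₗᵢ[ℂ] K) (S : K →L[ℂ] K) (T : H →L[ℂ] H) : Prop :=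
  IsStarNormal (S ^ n) ∧ ∀ x : H, S (V x) = V (T x)

/-- `S` is a *minimal* n-normal extension of `T` if no proper closed subspace of `K`
containing `H` and invariant under `S` yields, by restriction, an n-normal extension of `T`. -/
def IsMinimalNNormalExt (n : ℕ) (V : H →ₗᵢ[ℂ] K) (S : K →L[ℂ] K) (T : H →L[ℂ] H) : Prop :=
  IsNNormalExt n V S T ∧
  ∀ (M : Submodule ℂ K) (hM : IsClosed (M : Set K)) (hinv : ∀ y ∈ M, S y ∈ M)
    (_ : ∀ x : H, V x ∈ M),
    (letI : CompleteSpace M := hM.completeSpace_coe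
     IsStarNormal ((ContinuousLinearMap.codRestrict (S.comp M.subtypeL) M
        (fun y => hinv y y.2)) ^ n)) →
    M = ⊤

end

open scoped InnerProductSpace

section Gram

variable {𝕜 ι E F : Type*} [RCLike 𝕜] [NormedAddCommGroup E] [InnerProductSpace 𝕜 E]
  [NormedAddCommGroup F] [InnerProductSpace 𝕜 F]

theorem norm_linearCombination_eq_of_inner_eq {v : ι → E} {w : ι → F}
    (h : ∀ i j, ⟪v i, v j⟫_𝕜 = ⟪w i, w j⟫_𝕜) (c : ι →₀ 𝕜) :
    ‖Finsupp.linearCombination 𝕜 v c‖ = ‖Finsupp.linearCombination 𝕜 w c‖ := by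
  have hinner : ⟪Finsupp.linearCombination 𝕜 v c, Finsupp.linearCombination 𝕜 v c⟫_𝕜 =
      ⟪Finsupp.linearCombination 𝕜 w c, Finsupp.linearCombination 𝕜 w c⟫_𝕜 := by
    simp only [Finsupp.linearCombination_apply, Finsupp.sum_inner, Finsupp.inner_sum,
      inner_smul_left, inner_smul_right, h]
  rw [@norm_eq_sqrt_re_inner 𝕜, @norm_eq_sqrt_re_inner 𝕜, hinner]

theorem exists_linearIsometryEquiv_of_inner_eq [CompleteSpace E] [CompleteSpace F]
    {v : ι → E} {w : ι → F}
    (hv : Dense (Submodule.span 𝕜 (Set.range v) : Set E))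
    (hw : Dense (Submodule.span 𝕜 (Set.range w) : Set F))
    (h : ∀ i j, ⟪v i, v j⟫_𝕜 = ⟪w i, w j⟫_𝕜) :
    ∃ W : E ≃ₗᵢ[𝕜] F, ∀ i, W (v i) = w i := by
  have hv' : DenseRange (Finsupp.linearCombination 𝕜 v) := by
    rwa [DenseRange, ← LinearMap.coe_range, Finsupp.range_linearCombination]
  have hw' : DenseRange (Finsupp.linearCombination 𝕜 w) := by
    rwa [DenseRange, ← LinearMap.coe_range, Finsupp.range_linearCombination]
  let e := LinearEquiv.refl 𝕜 (ι →₀ 𝕜)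
  have hnorm : ∀ c, ‖Finsupp.linearCombination 𝕜 w (e c)‖ = ‖Finsupp.linearCombination 𝕜 v c‖ :=
    fun c => (norm_linearCombination_eq_of_inner_eq h c).symm
  refine ⟨e.extendOfIsometry _ _ hv' hw' hnorm, fun i => ?_⟩
  simpa [e] using e.extendOfIsometry_eq _ _ hv' hw' hnorm (Finsupp.single i 1)

end Gram

section Restriction

theorem coe_codRestrict_pow_apply {R E : Type*} [Semiring R] [AddCommMonoid E] [TopologicalSpace E]
    [Module R E] {p : Submodule R E} (S : E →L[R] E) (hSp : ∀ y : p, S y ∈ p) (m : ℕ) (y : p) :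
    ((codRestrict (S.comp p.subtypeL) p hSp ^ m) y : E) = (S ^ m) y := by
  induction m generalizing y with
  | zero => rfl
  | succ m ih => rw [pow_succ, mul_apply_eq_comp, ih, pow_succ, mul_apply_eq_comp]; rfl

variable {𝕜 K : Type*} [RCLike 𝕜] [NormedAddCommGroup K] [InnerProductSpace 𝕜 K]
  [CompleteSpace K] {M : Submodule 𝕜 K}

theorem IsStarNormal.restrict_of_adjoint_mem [CompleteSpace M] {A : K →L[𝕜] K} (hA : IsStarNormal A)
    (hAM : ∀ y ∈ M, adjoint A y ∈ M) {R : M →L[𝕜] M} (hR : ∀ y, (R y : K) = A y) :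
    IsStarNormal R := by
  set R' : M →L[𝕜] M := codRestrict ((adjoint A).comp M.subtypeL) M fun y => hAM y y.2
  have hR' : R' = adjoint R := (eq_adjoint_iff _ _).mpr fun x y => by
    simp only [Submodule.coe_inner, hR]
    exact adjoint_inner_left A y x
  refine ⟨?_⟩
  rw [star_eq_adjoint, ← hR']
  ext y
  change adjoint A (R y : K) = (R (R' y) : K)
  rw [hR, hR]
  exact DFunLike.congr_fun hA.star_comm_self.eq (y : K)

end Restriction

theorem Submodule.mapsTo_topologicalClosure_span_range {𝕜 ι E : Type*} [Semiring 𝕜]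
    [AddCommMonoid E] [TopologicalSpace E] [Module 𝕜 E] [ContinuousAdd E]
    [ContinuousConstSMul 𝕜 E] {g : ι → E} (f : E →L[𝕜] E) (hf : ∀ i, ∃ j, f (g i) = g j) :
    ∀ y ∈ (span 𝕜 (Set.range g)).topologicalClosure,
      f y ∈ (span 𝕜 (Set.range g)).topologicalClosure := by
  have hspan : span 𝕜 (Set.range g) ≤ (span 𝕜 (Set.range g)).comap (f : E →ₗ[𝕜] E) := by
    refine span_le.mpr ?_
    rintro _ ⟨i, rfl⟩
    obtain ⟨j, hj⟩ := hf i
    simpa [hj] using subset_span (Set.mem_range_self j)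
  have hmaps : Set.MapsTo f (span 𝕜 (Set.range g)) (span 𝕜 (Set.range g)) := fun y hy => hspan hy
  exact fun y hy => hmaps.closure f.continuous hy

theorem pow_apply_eq_of_apply_eq {R E F : Type*} [Semiring R] [AddCommMonoid E] [TopologicalSpace E]
    [Module R E] [AddCommMonoid F] [TopologicalSpace F] [Module R F] {V : E → F} {S : F →L[R] F}
    {T : E →L[R] E} (h : ∀ x, S (V x) = V (T x)) (m : ℕ) (x : E) :
    (S ^ m) (V x) = V ((T ^ m) x) := by
  induction m with
  | zero => rfl
  | succ m ih => rw [pow_succ', mul_apply_eq_comp, ih, h, pow_succ', mul_apply_eq_comp]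

section NNormal

variable {H K : Type*} [NormedAddCommGroup H] [InnerProductSpace ℂ H]
  [NormedAddCommGroup K] [InnerProductSpace ℂ K] [CompleteSpace K]

-- The generators `(S*)ⁿᵏ (V x)` of a minimal extension, indexed by `(k, x)`.
noncomputable def adjointPowOrbit (n : ℕ) (V : H →ₗᵢ[ℂ] K) (S : K →L[ℂ] K) (p : ℕ × H) : K :=
  adjoint ((S ^ n) ^ p.1) (V p.2)

theorem adjointPowOrbit_zero (n : ℕ) (V : H →ₗᵢ[ℂ] K) (S : K →L[ℂ] K) (x : H) :
    adjointPowOrbit n V S (0, x) = V x := by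
  rw [adjointPowOrbit, pow_zero, ← star_eq_adjoint, star_one]
  rfl

theorem adjoint_pow_apply_adjointPowOrbit (n : ℕ) (V : H →ₗᵢ[ℂ] K) (S : K →L[ℂ] K) (p : ℕ × H) :
    adjoint (S ^ n) (adjointPowOrbit n V S p) = adjointPowOrbit n V S (p.1 + 1, p.2) := by
  rw [adjointPowOrbit, adjointPowOrbit, pow_succ, ← star_eq_adjoint (_ * _), star_mul]
  rfl

namespace IsNNormalExt

variable {n : ℕ} {V : H →ₗᵢ[ℂ] K} {S : K →L[ℂ] K} {T : H →L[ℂ] H}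

theorem apply_adjointPowOrbit (h : IsNNormalExt n V S T) (p : ℕ × H) :
    S (adjointPowOrbit n V S p) = adjointPowOrbit n V S (p.1, T p.2) := by
  have hc : Commute S (star ((S ^ n) ^ p.1)) :=
    star_pow (S ^ n) p.1 ▸ (h.1.commute_star_right (Commute.self_pow S n)).pow_right p.1
  rw [adjointPowOrbit, ← star_eq_adjoint, ← mul_apply_eq_comp, hc.eq, mul_apply_eq_comp, h.2]
  rfl

theorem inner_adjointPowOrbit (h : IsNNormalExt n V S T) (j k : ℕ) (x y : H) :
    ⟪adjointPowOrbit n V S (j, x), adjointPowOrbit n V S (k, y)⟫_ℂ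
      = ⟪((T ^ n) ^ k) x, ((T ^ n) ^ j) y⟫_ℂ := by
  have hc : Commute ((S ^ n) ^ j) (star ((S ^ n) ^ k)) :=
    star_pow (S ^ n) k ▸ (h.1.star_comm_self.pow_pow k j).symm
  rw [star_eq_adjoint] at hc
  rw [adjointPowOrbit, adjointPowOrbit, adjoint_inner_left, ← mul_apply_eq_comp, hc.eq,
    mul_apply_eq_comp, adjoint_inner_right, ← pow_mul, ← pow_mul, pow_apply_eq_of_apply_eq h.2,
    pow_apply_eq_of_apply_eq h.2, LinearIsometry.inner_map_map, pow_mul, pow_mul]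

end IsNNormalExt

theorem IsMinimalNNormalExt.dense_span_adjointPowOrbit {n : ℕ} {V : H →ₗᵢ[ℂ] K} {S : K →L[ℂ] K}
    {T : H →L[ℂ] H} (h : IsMinimalNNormalExt n V S T) :
    Dense (Submodule.span ℂ (Set.range (adjointPowOrbit n V S)) : Set K) := by
  set M := (Submodule.span ℂ (Set.range (adjointPowOrbit n V S))).topologicalClosure
  have hSM : ∀ y ∈ M, S y ∈ M := Submodule.mapsTo_topologicalClosure_span_range S
    fun p => ⟨_, h.1.apply_adjointPowOrbit p⟩
  have hAM : ∀ y ∈ M, adjoint (S ^ n) y ∈ M := Submodule.mapsTo_topologicalClosure_span_range _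
    fun p => ⟨_, adjoint_pow_apply_adjointPowOrbit n V S p⟩
  have hVM : ∀ x, V x ∈ M := fun x => Submodule.le_topologicalClosure _ <|
    Submodule.subset_span ⟨(0, x), adjointPowOrbit_zero n V S x⟩
  have hMc : IsClosed (M : Set K) := Submodule.isClosed_topologicalClosure _
  have : CompleteSpace M := hMc.completeSpace_coe
  rw [Submodule.dense_iff_topologicalClosure_eq_top]
  exact h.2 M hMc hSM hVM (h.1.1.restrict_of_adjoint_mem hAM (coe_codRestrict_pow_apply S _ n))

end NNormal

theorem minimal_extensions_unitarily_equivalent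
    {H₁ K₁ H₂ K₂ : Type*}
    [NormedAddCommGroup H₁] [InnerProductSpace ℂ H₁]
    [NormedAddCommGroup K₁] [InnerProductSpace ℂ K₁] [CompleteSpace K₁]
    [NormedAddCommGroup H₂] [InnerProductSpace ℂ H₂]
    [NormedAddCommGroup K₂] [InnerProductSpace ℂ K₂] [CompleteSpace K₂]
    (n : ℕ) (T₁ : H₁ →L[ℂ] H₁) (T₂ : H₂ →L[ℂ] H₂)
    (V₁ : H₁ →ₗᵢ[ℂ] K₁) (S₁ : K₁ →L[ℂ] K₁)
    (V₂ : H₂ →ₗᵢ[ℂ] K₂) (S₂ : K₂ →L[ℂ] K₂)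
    (h₁ : IsMinimalNNormalExt n V₁ S₁ T₁) (h₂ : IsMinimalNNormalExt n V₂ S₂ T₂)
    (U : H₁ ≃ₗᵢ[ℂ] H₂) (hU : ∀ x : H₁, U (T₁ x) = T₂ (U x)) :
    ∃ W : K₁ ≃ₗᵢ[ℂ] K₂, ∀ y : K₁, W (S₁ y) = S₂ (W y) := by
  let w : ℕ × H₁ → K₂ := adjointPowOrbit n V₂ S₂ ∘ Prod.map id U
  have hw : Dense (Submodule.span ℂ (Set.range w) : Set K₂) := by
    rw [(Prod.map_surjective.mpr ⟨Function.surjective_id, U.surjective⟩).range_comp]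
    exact h₂.dense_span_adjointPowOrbit
  have hgram : ∀ p q, ⟪adjointPowOrbit n V₁ S₁ p, adjointPowOrbit n V₁ S₁ q⟫_ℂ = ⟪w p, w q⟫_ℂ := by
    rintro ⟨j, x⟩ ⟨k, y⟩
    have hUT := pow_apply_eq_of_apply_eq (pow_apply_eq_of_apply_eq (fun x => (hU x).symm) n)
    change _ = ⟪adjointPowOrbit n V₂ S₂ (j, U x), adjointPowOrbit n V₂ S₂ (k, U y)⟫_ℂ
    rw [h₁.1.inner_adjointPowOrbit, h₂.1.inner_adjointPowOrbit, hUT, hUT,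
      LinearIsometryEquiv.inner_map_map]
  obtain ⟨W, hW⟩ := exists_linearIsometryEquiv_of_inner_eq h₁.dense_span_adjointPowOrbit hw hgram
  let W' : K₁ →L[ℂ] K₂ := W.toLinearIsometry.toContinuousLinearMap
  have hcomm : W'.comp S₁ = S₂.comp W' := by
    refine ContinuousLinearMap.ext_on h₁.dense_span_adjointPowOrbit ?_
    rintro _ ⟨⟨k, x⟩, rfl⟩
    simp [W', hW, w, h₁.1.apply_adjointPowOrbit, h₂.1.apply_adjointPowOrbit, hU]
  exact ⟨W, fun y => DFunLike.congr_fun hcomm y⟩
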